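/- For every ρ ∈ (0,1) one has ∫₀^{2π} |Im((1 + ρe^{iα})/(1 − ρe^{iα}))| dα = 4·log((1+ρ)/(1−ρ)). -/

import Mathlib

open Complex Set

/-! The imaginary part of the Schwarz kernel on the circle of radius `ρ` is the `α`-derivative of
`log |1 - ρ e^{iα}|² = log (1 - 2ρ cos α + ρ²)`. This function increases on `[0, π]` and decreases
on `[π, 2π]`, so the integral of the absolute value of its derivative is twice its oscillation
`log (1 + ρ)² - log (1 - ρ)²`. -/

theorem Complex.im_one_add_div_one_sub (z : ℂ) :
    ((1 + z) / (1 - z)).im = 2 * z.im / normSq (1 - z) := by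
  rw [div_im]
  simp only [add_re, add_im, sub_re, sub_im, one_re, one_im]
  ring

theorem Complex.normSq_one_sub_ofReal_mul_exp (ρ α : ℝ) :
    normSq (1 - ρ * exp (α * I)) = 1 - 2 * ρ * Real.cos α + ρ ^ 2 := by
  rw [exp_mul_I, ← ofReal_cos, ← ofReal_sin, normSq_apply]
  simp only [sub_re, sub_im, one_re, one_im, mul_re, mul_im, add_re, add_im, ofReal_re,
    ofReal_im, I_re, I_im]
  linear_combination ρ ^ 2 * Real.sin_sq_add_cos_sq α

theorem Complex.im_one_add_div_one_sub_ofReal_mul_exp (ρ α : ℝ) :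
    ((1 + ρ * exp (α * I)) / (1 - ρ * exp (α * I))).im =
      2 * ρ * Real.sin α / (1 - 2 * ρ * Real.cos α + ρ ^ 2) := by
  rw [im_one_add_div_one_sub, normSq_one_sub_ofReal_mul_exp, exp_mul_I, ← ofReal_cos,
    ← ofReal_sin, mul_assoc]
  simp only [add_im, mul_im, ofReal_re, ofReal_im, I_re, I_im, zero_mul, add_zero, mul_one,
    mul_zero]
  ring

namespace intervalIntegral

variable {f f' : ℝ → ℝ} {a b : ℝ}

theorem integral_abs_deriv_of_nonneg (hab : a ≤ b) (hf : ∀ x ∈ uIcc a b, HasDerivAt f (f' x) x)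
    (hint : IntervalIntegrable f' MeasureTheory.volume a b) (hpos : ∀ x ∈ Icc a b, 0 ≤ f' x) :
    ∫ x in a..b, |f' x| = f b - f a := by
  rw [← integral_eq_sub_of_hasDerivAt hf hint]
  refine integral_congr fun x hx ↦ abs_of_nonneg (hpos x ?_)
  rwa [uIcc_of_le hab] at hx

theorem integral_abs_deriv_of_nonpos (hab : a ≤ b) (hf : ∀ x ∈ uIcc a b, HasDerivAt f (f' x) x)
    (hint : IntervalIntegrable f' MeasureTheory.volume a b) (hneg : ∀ x ∈ Icc a b, f' x ≤ 0) :
    ∫ x in a..b, |f' x| = f a - f b := by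
  have h := integral_abs_deriv_of_nonneg hab (fun x hx ↦ (hf x hx).neg) hint.neg
    fun x hx ↦ neg_nonneg.mpr (hneg x hx)
  simpa only [abs_neg, Pi.neg_apply, neg_sub_neg] using h

end intervalIntegral

section CircleDenominator

variable {ρ : ℝ}

theorem one_sub_two_mul_cos_add_sq_pos (hρ : |ρ| < 1) (α : ℝ) :
    0 < 1 - 2 * ρ * Real.cos α + ρ ^ 2 := by
  have hρcos : ρ * Real.cos α ≤ |ρ| :=
    calc ρ * Real.cos α ≤ |ρ * Real.cos α| := le_abs_self _
      _ = |ρ| * |Real.cos α| := abs_mul _ _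
      _ ≤ |ρ| := mul_le_of_le_one_right (abs_nonneg ρ) (Real.abs_cos_le_one α)
  nlinarith [sq_abs ρ, pow_pos (sub_pos.2 hρ) 2]

theorem hasDerivAt_log_one_sub_two_mul_cos_add_sq (hρ : |ρ| < 1) (α : ℝ) :
    HasDerivAt (fun t ↦ Real.log (1 - 2 * ρ * Real.cos t + ρ ^ 2))
      (2 * ρ * Real.sin α / (1 - 2 * ρ * Real.cos α + ρ ^ 2)) α := by
  have h := (((Real.hasDerivAt_cos α).const_mul (2 * ρ)).const_sub 1).add_const (ρ ^ 2)
  rw [show -(2 * ρ * -Real.sin α) = 2 * ρ * Real.sin α by ring] at h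
  exact h.log (one_sub_two_mul_cos_add_sq_pos hρ α).ne'

theorem integral_abs_two_mul_sin_div_one_sub_two_mul_cos_add_sq (hρ₀ : 0 ≤ ρ) (hρ₁ : ρ < 1) :
    ∫ α in (0)..(2 * Real.pi), |2 * ρ * Real.sin α / (1 - 2 * ρ * Real.cos α + ρ ^ 2)| =
      2 * (Real.log ((1 + ρ) ^ 2) - Real.log ((1 - ρ) ^ 2)) := by
  have hρ : |ρ| < 1 := by rwa [abs_of_nonneg hρ₀]
  have hD := one_sub_two_mul_cos_add_sq_pos hρ
  have hcont : Continuous fun α ↦ 2 * ρ * Real.sin α / (1 - 2 * ρ * Real.cos α + ρ ^ 2) :=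
    .div (by fun_prop) (by fun_prop) fun α ↦ (hD α).ne'
  have hnonneg : ∀ α ∈ Icc 0 Real.pi, 0 ≤ 2 * ρ * Real.sin α / (1 - 2 * ρ * Real.cos α + ρ ^ 2) :=
    fun α hα ↦ div_nonneg (mul_nonneg (by positivity)
      (Real.sin_nonneg_of_nonneg_of_le_pi hα.1 hα.2)) (hD α).le
  have hnonpos : ∀ α ∈ Icc Real.pi (2 * Real.pi),
      2 * ρ * Real.sin α / (1 - 2 * ρ * Real.cos α + ρ ^ 2) ≤ 0 := fun α hα ↦ by
    have hsin : Real.sin α ≤ 0 := by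
      rw [← Real.sin_sub_two_pi]
      exact Real.sin_nonpos_of_nonpos_of_neg_pi_le (by linarith [hα.2]) (by linarith [hα.1])
    exact div_nonpos_of_nonpos_of_nonneg (mul_nonpos_of_nonneg_of_nonpos (by positivity) hsin)
      (hD α).le
  rw [← intervalIntegral.integral_add_adjacent_intervals (b := Real.pi)
      (hcont.abs.intervalIntegrable _ _) (hcont.abs.intervalIntegrable _ _),
    intervalIntegral.integral_abs_deriv_of_nonneg Real.pi_pos.le
      (fun α _ ↦ hasDerivAt_log_one_sub_two_mul_cos_add_sq hρ α)
      (hcont.intervalIntegrable _ _) hnonneg,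
    intervalIntegral.integral_abs_deriv_of_nonpos (by linarith [Real.pi_pos])
      (fun α _ ↦ hasDerivAt_log_one_sub_two_mul_cos_add_sq hρ α)
      (hcont.intervalIntegrable _ _) hnonpos, Real.cos_zero, Real.cos_pi, Real.cos_two_pi]
  ring_nf

end CircleDenominator

theorem schwarz_kernel_im_integral (ρ : ℝ) (hρ : ρ ∈ Ioo (0:ℝ) 1) :
    (∫ α in (0:ℝ)..(2 * Real.pi),
        |(((1 + (ρ : ℂ) * Complex.exp ((α : ℂ) * Complex.I)) /
            (1 - (ρ : ℂ) * Complex.exp ((α : ℂ) * Complex.I))).im)|) =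
      4 * Real.log ((1 + ρ) / (1 - ρ)) := by
  obtain ⟨hρ₀, hρ₁⟩ := hρ
  simp_rw [im_one_add_div_one_sub_ofReal_mul_exp]
  rw [integral_abs_two_mul_sin_div_one_sub_two_mul_cos_add_sq hρ₀.le hρ₁,
    Real.log_div (by linarith) (by linarith), Real.log_pow, Real.log_pow]
  push_cast
  ring
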